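/- arXiv:1810.10088 — 3 statements merged into one kernel-verified Lean document; each statement's English description precedes it below -/
import Mathlib

section
/- Let p be a prime with p ≥ 5, let k ≥ 1, and set s = (p−1)·k. Then the p-adic valuation of the denominator (in lowest terms) of the rational number B_s/(2s) equals ν_p(k) + 1, where B_s is the s-th Bernoulli number. -/
/-!
By von Staudt–Clausen, when `p - 1 ∣ s` the number `B_s + 1/p` is an integer minus a sum of
`1/q` over primes `q ≠ p`, hence `p`-integral, so `ν_p(B_s) = -1`. For `p ≥ 3` the prime `p`
divides neither `2` nor `p - 1`, so `ν_p(B_s / 2s) = -1 - ν_p(k) < 0`, and a rational of negative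
valuation has exactly minus that valuation in its denominator.
-/

open Finset

theorem padicValNat_den_eq_neg_padicValRat {p : ℕ} {q : ℚ} (hq : padicValRat p q ≤ 0) :
    (padicValNat p q.den : ℤ) = -padicValRat p q := by
  rw [padicValRat_def] at hq ⊢
  suffices padicValInt p q.num = 0 by omega
  by_contra hnum
  have hp_num : p ∣ q.num.natAbs :=
    dvd_of_one_le_padicValNat (by unfold padicValInt at hnum; omega)
  have hp_den : p ∣ q.den := dvd_of_one_le_padicValNat (by omega)
  have hp_one : p = 1 := Nat.eq_one_of_dvd_one (q.reduced ▸ Nat.dvd_gcd hp_num hp_den)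
  simp [hp_one] at hnum

theorem padicNorm_bernoulli_two_mul {p m : ℕ} [hp : Fact p.Prime] (hm : 0 < m)
    (hpm : p - 1 ∣ 2 * m) : padicNorm p (bernoulli (2 * m)) = p := by
  obtain ⟨z, hz⟩ := Bernoulli.vonStaudt_clausen m
  have hp_mem : p ∈ {q ∈ range (2 * m + 2) | q.Prime ∧ q - 1 ∣ 2 * m} := by
    have := Nat.le_of_dvd (by omega) hpm
    simp only [mem_filter, mem_range]
    exact ⟨by omega, hp.out, hpm⟩
  rw [← add_sum_erase _ _ hp_mem] at hz
  set R : ℚ :=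
    z - ∑ q ∈ {q ∈ range (2 * m + 2) | q.Prime ∧ q - 1 ∣ 2 * m}.erase p, (1 : ℚ) / q
  have hB : bernoulli (2 * m) = R + -(1 / p) := by
    simp only [R]; linarith
  have hR : padicNorm p R ≤ 1 := by
    refine padicNorm.sub.trans
      (max_le (padicNorm.of_int z) (padicNorm.sum_le' (fun q hq => ?_) zero_le_one))
    obtain ⟨hqp, hq⟩ := mem_erase.mp hq
    have : Fact q.Prime := ⟨(mem_filter.mp hq).2.1⟩
    rw [padicNorm.div, padicNorm.one, padicNorm.padicNorm_of_prime_of_ne (Ne.symm hqp), div_one]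
  have hinv : padicNorm p (-(1 / p)) = p := by
    rw [padicNorm.neg, padicNorm.div, padicNorm.one, padicNorm.padicNorm_p_of_prime, one_div,
      inv_inv]
  have hR_lt : padicNorm p R < padicNorm p (-(1 / p)) := by
    rw [hinv]; exact hR.trans_lt (by exact_mod_cast hp.out.one_lt)
  rw [hB, padicNorm.add_eq_max_of_ne hR_lt.ne, max_eq_right hR_lt.le, hinv]

theorem padicValRat_bernoulli_two_mul {p m : ℕ} [hp : Fact p.Prime] (hm : 0 < m)
    (hpm : p - 1 ∣ 2 * m) : padicValRat p (bernoulli (2 * m)) = -1 := by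
  have hnorm := padicNorm_bernoulli_two_mul hm hpm
  have hB : bernoulli (2 * m) ≠ 0 := fun h => by
    simp [h, eq_comm, hp.out.ne_zero] at hnorm
  rw [padicNorm.eq_zpow_of_nonzero hB] at hnorm
  have hp1 : (p : ℚ) ≠ 1 := by exact_mod_cast hp.out.ne_one
  have := zpow_right_injective₀ (by exact_mod_cast hp.out.pos) hp1 (hnorm.trans (zpow_one _).symm)
  omega

theorem padicValNat_two_mul_sub_one_mul {p : ℕ} [hp : Fact p.Prime] (hp2 : p ≠ 2) {k : ℕ}
    (hk : k ≠ 0) : padicValNat p (2 * ((p - 1) * k)) = padicValNat p k := by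
  have hp1 : 0 < p - 1 := by have := hp.out.two_le; omega
  rw [padicValNat.mul two_ne_zero (by positivity), padicValNat.mul hp1.ne' hk,
    padicValNat_primes hp2,
    padicValNat.eq_zero_of_not_dvd (Nat.not_dvd_of_pos_of_lt hp1 (by omega)), zero_add, zero_add]

/-- Let `p ≥ 5` be a prime, `k ≥ 1`, and `s = (p-1)·k`. Then the `p`-adic valuation of
the denominator (in lowest terms) of `B_s / (2s)` equals `ν_p(k) + 1`, where `B_s` is
the `s`-th Bernoulli number. -/
theorem padicValNat_den_bernoulli_div
    (p k : ℕ) (hp : p.Prime) (hp5 : 5 ≤ p) (hk : 1 ≤ k) :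
    padicValNat p ((bernoulli ((p - 1) * k) / (2 * ((p - 1) * k : ℕ) : ℚ)).den) =
      padicValNat p k + 1 := by
  have : Fact p.Prime := ⟨hp⟩
  have hs0 : (p - 1) * k ≠ 0 := mul_ne_zero (by omega) (by omega)
  obtain ⟨m, hm⟩ := (hp.even_sub_one (by omega)).mul_right k
  have hs : (p - 1) * k = 2 * m := by omega
  have hB : padicValRat p (bernoulli ((p - 1) * k)) = -1 :=
    hs ▸ padicValRat_bernoulli_two_mul (by omega) (hs ▸ dvd_mul_right _ _)
  have hB0 : bernoulli ((p - 1) * k) ≠ 0 := fun h => by simp [h] at hB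
  have h2s : padicValRat p (2 * ((p - 1) * k : ℕ) : ℚ) = padicValNat p k := by
    rw [← padicValNat_two_mul_sub_one_mul (by omega) (by omega : k ≠ 0), ← padicValRat.of_nat]
    norm_cast
  have hq : padicValRat p (bernoulli ((p - 1) * k) / (2 * ((p - 1) * k : ℕ) : ℚ)) =
      -1 - padicValNat p k := by
    rw [padicValRat.div hB0 (by positivity), hB, h2s]
  have := padicValNat_den_eq_neg_padicValRat (hq.trans_le (by omega))
  omega
end

section
/- Let p be a prime with p ≥ 5 and let q ≥ 2 be an integer coprime to p whose residue class generates the unit group (ℤ/p²ℤ)ˣ. Then for every k ≥ 1, setting s = (p−1)·k, the p-adic valuation of q^s − 1 equals the p-adic valuation of the denominator (in lowest terms) of the rational number B_s/(2s), where B_s is the s-th Bernoulli number. -/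
/-!
Since `q` generates `(ℤ/p²ℤ)ˣ`, it has order `p(p-1)` there, so `q^(p-1) ≡ 1` modulo `p` but not
modulo `p²`; lifting the exponent gives `ν_p(q^((p-1)k) - 1) = 1 + ν_p(k)`. On the other side, by
von Staudt–Clausen `B_s + 1/p` is `p`-integral whenever `p - 1 ∣ s`, so `ν_p(B_s) = -1` and
`ν_p(B_s / 2s) = -1 - ν_p(k)`, which is minus the valuation of its denominator.
-/

open Finset WithZero

lemma not_pow_sub_one_modEq_one_of_zpowers_eq_top {p q : ℕ} (hp : p.Prime) (hq : q.Coprime p)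
    (hgen : Subgroup.zpowers (ZMod.unitOfCoprime q (hq.pow_right 2) : (ZMod (p ^ 2))ˣ) = ⊤) :
    ¬ q ^ (p - 1) ≡ 1 [MOD p ^ 2] := by
  intro h
  have : NeZero (p ^ 2) := ⟨pow_ne_zero 2 hp.ne_zero⟩
  have hord : orderOf (ZMod.unitOfCoprime q (hq.pow_right 2)) = p * (p - 1) := by
    rw [orderOf_eq_card_of_zpowers_eq_top hgen, Nat.card_eq_fintype_card,
      ZMod.card_units_eq_totient, Nat.totient_prime_pow_succ hp, pow_one]
  have hpow : ZMod.unitOfCoprime q (hq.pow_right 2) ^ (p - 1) = 1 := by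
    ext
    simpa [← ZMod.natCast_eq_natCast_iff] using h
  have hle := Nat.le_of_dvd (Nat.sub_pos_of_lt hp.one_lt) (hord ▸ orderOf_dvd_of_pow_eq_one hpow)
  have := Nat.mul_le_mul_right (p - 1) hp.two_le
  have := hp.two_le
  omega

lemma padicValNat_pow_pred_sub_one_eq_one {p q : ℕ} [hp : Fact p.Prime] (hq : q.Coprime p)
    (hsq : ¬ q ^ (p - 1) ≡ 1 [MOD p ^ 2]) : padicValNat p (q ^ (p - 1) - 1) = 1 := by
  have hq0 : q ≠ 0 := by rintro rfl; exact hp.out.ne_one (Nat.coprime_zero_left _ |>.mp hq)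
  have hpos : 1 ≤ q ^ (p - 1) := Nat.one_le_pow _ _ (Nat.pos_of_ne_zero hq0)
  have hdvd : p ∣ q ^ (p - 1) - 1 :=
    (Nat.modEq_iff_dvd' hpos).mp (Nat.ModEq.pow_card_sub_one_eq_one hp.out hq).symm
  have hsq' : ¬ p ^ 2 ∣ q ^ (p - 1) - 1 := fun h => hsq ((Nat.modEq_iff_dvd' hpos).mpr h).symm
  have hne : q ^ (p - 1) - 1 ≠ 0 := fun h => hsq' (h ▸ dvd_zero _)
  have h1 := one_le_padicValNat_of_dvd hne hdvd
  have h2 := mt (padicValNat_dvd_iff_le hne).mpr hsq'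
  omega

lemma padicValNat_pow_sub_one {p a n : ℕ} [hp : Fact p.Prime] (hodd : Odd p) (ha : 1 < a)
    (hpa : p ∣ a - 1) (hn : n ≠ 0) :
    padicValNat p (a ^ n - 1) = padicValNat p (a - 1) + padicValNat p n := by
  have hpa' : ¬ p ∣ a := fun h => hp.out.one_lt.ne'
    (Nat.dvd_one.mp (Nat.sub_sub_self ha.le ▸ Nat.dvd_sub h hpa))
  simpa using padicValNat.pow_sub_pow hodd ha (by simpa using hpa) hpa' hn

lemma padicValRat_eq_neg_of_padicValuation_eq_exp {p : ℕ} [Fact p.Prime] {x : ℚ} {m : ℤ}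
    (h : Rat.padicValuation p x = exp m) : padicValRat p x = -m := by
  have hx : x ≠ 0 := by rintro rfl; rw [map_zero] at h; exact exp_ne_zero h.symm
  simp only [Rat.padicValuation, Valuation.coe_mk, MonoidWithZeroHom.coe_mk, ZeroHom.coe_mk, hx,
    if_false, exp_inj] at h
  omega

lemma padicValNat_den_of_padicValRat_eq_neg {p : ℕ} [hp : Fact p.Prime] {r : ℚ} {m : ℕ}
    (h : padicValRat p r = -m) : padicValNat p r.den = m := by
  rw [padicValRat_def, padicValInt] at h
  rcases Nat.eq_zero_or_pos (padicValNat p r.den) with hden | hden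
  · omega
  · have hnum : padicValNat p r.num.natAbs = 0 := by
      refine padicValNat.eq_zero_of_not_dvd fun hdvd => ?_
      exact (Nat.Prime.coprime_iff_not_dvd hp.out).mp (r.reduced.coprime_dvd_left hdvd)
        (dvd_of_one_le_padicValNat hden)
    omega

lemma padicValuation_one_div_prime_le_one {p ℓ : ℕ} [Fact p.Prime] (hℓ : ℓ.Prime) (hne : ℓ ≠ p) :
    Rat.padicValuation p (1 / ℓ) ≤ 1 := by
  rw [Rat.padicValuation_le_one_iff, one_div, Rat.inv_natCast_den_of_pos hℓ.pos]
  exact fun h => hne ((Nat.prime_dvd_prime_iff_eq Fact.out hℓ).mp h).symm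

theorem padicValRat_bernoulli_of_sub_one_dvd {p n : ℕ} [hp : Fact p.Prime] (hn : n ≠ 0)
    (he : Even n) (hpn : p - 1 ∣ n) : padicValRat p (bernoulli n) = -1 := by
  obtain ⟨k, rfl⟩ := he
  rw [← two_mul] at hpn hn ⊢
  obtain ⟨z, hz⟩ := Bernoulli.vonStaudt_clausen k
  have hpS : p ∈ {ℓ ∈ range (2 * k + 2) | ℓ.Prime ∧ ℓ - 1 ∣ 2 * k} := by
    have := Nat.le_of_dvd (Nat.pos_of_ne_zero hn) hpn
    simp only [mem_filter, mem_range]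
    exact ⟨by omega, hp.out, hpn⟩
  rw [← add_sum_erase _ _ hpS] at hz
  set S := ∑ ℓ ∈ {ℓ ∈ range (2 * k + 2) | ℓ.Prime ∧ ℓ - 1 ∣ 2 * k}.erase p, (1 : ℚ) / ℓ
  have hB : bernoulli (2 * k) = (z - S) - 1 / p := by linear_combination -hz
  have hint : Rat.padicValuation p (z - S) ≤ 1 := by
    refine (Valuation.map_sub _ _ _).trans (max_le (Int.padicValuation_le_one p z) ?_)
    refine Valuation.map_sum_le _ fun ℓ hℓ => ?_
    simp only [mem_erase, mem_filter] at hℓ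
    exact padicValuation_one_div_prime_le_one hℓ.2.2.1 hℓ.1
  have hinv : Rat.padicValuation p (1 / p) = exp 1 := by
    rw [map_div₀, map_one, Rat.padicValuation_self, one_div, ← exp_neg, neg_neg]
  apply padicValRat_eq_neg_of_padicValuation_eq_exp
  rw [hB, Valuation.map_sub_eq_of_lt_right, hinv]
  exact hinv ▸ hint.trans_lt (by rw [← exp_zero]; exact exp_lt_exp.mpr one_pos)

theorem padicValNat_pow_sub_one_eq_padicValNat_den_bernoulli_div_general
    (p q : ℕ) (hp : p.Prime) (hp5 : 5 ≤ p) (hq : Nat.Coprime q p)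
    (hgen : Subgroup.zpowers (ZMod.unitOfCoprime q (hq.pow_right 2) : (ZMod (p ^ 2))ˣ) = ⊤) :
    ∀ k : ℕ, 1 ≤ k →
      padicValNat p (q ^ ((p - 1) * k) - 1) =
        padicValNat p ((bernoulli ((p - 1) * k) / (2 * ((p - 1) * k : ℕ) : ℚ)).den) := by
  have : Fact p.Prime := ⟨hp⟩
  intro k hk
  have hodd : Odd p := hp.odd_of_ne_two (by omega)
  have hval : padicValNat p (q ^ (p - 1) - 1) = 1 := padicValNat_pow_pred_sub_one_eq_one hq
    (not_pow_sub_one_modEq_one_of_zpowers_eq_top hp hq hgen)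
  have hq1 : 1 < q ^ (p - 1) := Nat.lt_of_sub_ne_zero fun h => by simp [h] at hval
  have hn : (p - 1) * k ≠ 0 := Nat.mul_ne_zero (by omega) (by omega)
  have hval2s : padicValRat p (2 * ((p - 1) * k : ℕ)) = padicValNat p k := by
    have h2p : ¬ p ∣ 2 * (p - 1) := fun h => by
      rcases (Nat.Prime.dvd_mul hp).mp h with h | h <;> have := Nat.le_of_dvd (by omega) h <;> omega
    rw [← Nat.cast_ofNat, ← Nat.cast_mul, padicValRat.of_nat, ← mul_assoc,
      padicValNat.mul (by omega) (by omega), padicValNat.eq_zero_of_not_dvd h2p, zero_add]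
  have hB := padicValRat_bernoulli_of_sub_one_dvd hn
    ((Nat.Odd.sub_odd hodd odd_one).mul_right k) ⟨k, rfl⟩
  rw [pow_mul, padicValNat_pow_sub_one hodd hq1 (dvd_of_one_le_padicValNat hval.ge) (by omega),
    hval]
  refine (padicValNat_den_of_padicValRat_eq_neg ?_).symm
  rw [padicValRat.div (fun h => by simp [h] at hB) (by positivity), hB, hval2s]
  push_cast
  ring

/-- Let `p ≥ 5` be a prime and `q ≥ 2` an integer coprime to `p` whose residue class
generates `(ℤ/p²ℤ)ˣ`. For every `k ≥ 1`, with `s = (p-1)·k`, the `p`-adic valuation of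
`q^s - 1` equals the `p`-adic valuation of the denominator (in lowest terms) of
`B_s / (2s)`, where `B_s` is the `s`-th Bernoulli number. -/
theorem padicValNat_pow_sub_one_eq_padicValNat_den_bernoulli_div
    (p q : ℕ) (hp : p.Prime) (hp5 : 5 ≤ p) (hq2 : 2 ≤ q) (hq : Nat.Coprime q p)
    (hgen : Subgroup.zpowers (ZMod.unitOfCoprime q (hq.pow_right 2) : (ZMod (p ^ 2))ˣ) = ⊤) :
    ∀ k : ℕ, 1 ≤ k →
      padicValNat p (q ^ ((p - 1) * k) - 1) =
        padicValNat p ((bernoulli ((p - 1) * k) / (2 * ((p - 1) * k : ℕ) : ℚ)).den) :=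
  padicValNat_pow_sub_one_eq_padicValNat_den_bernoulli_div_general p q hp hp5 hq hgen
end

section
/- Let p be a prime with p ≥ 5 and let k ≥ 1, j ≥ 0, ℓ, ε₁, ε₂, ε₃ be natural numbers with ℓ ≤ p − 1 and ε₁, ε₂, ε₃ ∈ {0, 1}. If ℓ·p^(j+1) + ε₁ + ε₂·(p − 1) + ε₃ ≥ p^(k+1), then ℓ·p^j·(2p² − 2p) + ε₁·(2p² − 2p − 1) + ε₂·(2p² − 2p + 1) + ε₃·(2p² − 1) ≥ p^k·(2p² − 2p). -/
set_option maxHeartbeats 1600000 in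
/-- Degree/May-filtration estimate from Proposition 3.3: if
`ℓ·p^(j+1) + ε₁ + ε₂·(p-1) + ε₃ ≥ p^(k+1)` with `ℓ ≤ p - 1` and `ε₁, ε₂, ε₃ ∈ {0,1}`,
then `ℓ·p^j·(2p²-2p) + ε₁·(2p²-2p-1) + ε₂·(2p²-2p+1) + ε₃·(2p²-1) ≥ p^k·(2p²-2p)`. -/
theorem may_filtration_degree_estimate
    (p k j l e₁ e₂ e₃ : ℕ) (hp : p.Prime) (hp5 : 5 ≤ p) (hk : 1 ≤ k)
    (hl : l ≤ p - 1) (he₁ : e₁ ≤ 1) (he₂ : e₂ ≤ 1) (he₃ : e₃ ≤ 1)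
    (h : l * p ^ (j + 1) + e₁ + e₂ * (p - 1) + e₃ ≥ p ^ (k + 1)) :
    l * p ^ j * (2 * p ^ 2 - 2 * p) + e₁ * (2 * p ^ 2 - 2 * p - 1) +
        e₂ * (2 * p ^ 2 - 2 * p + 1) + e₃ * (2 * p ^ 2 - 1) ≥
      p ^ k * (2 * p ^ 2 - 2 * p) := by
  have hp1 : 1 ≤ p := by omega
  have hpp : 2 * p + 1 ≤ 2 * p ^ 2 := by nlinarith
  have hsub1 : 2 * p ≤ 2 * p ^ 2 := by omega
  have hsub2 : 1 ≤ 2 * p ^ 2 - 2 * p := by omega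
  have hsub3 : 1 ≤ 2 * p ^ 2 := by omega
  rw [pow_succ] at h
  rw [pow_succ] at h
  zify [hsub1, hsub2, hsub3, hp1] at h hl ⊢
  have hA0 : (0:ℤ) ≤ 2 * (p:ℤ) ^ 2 - 2 * p := by
    have : (5:ℤ) ≤ (p:ℤ) := by exact_mod_cast hp5
    nlinarith
  have hp5' : (5:ℤ) ≤ (p:ℤ) := by exact_mod_cast hp5
  have he₁' : (e₁:ℤ) ≤ 1 := by exact_mod_cast he₁
  have he₂' : (e₂:ℤ) ≤ 1 := by exact_mod_cast he₂
  have he₃' : (e₃:ℤ) ≤ 1 := by exact_mod_cast he₃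
  have he₁0 : (0:ℤ) ≤ (e₁:ℤ) := by positivity
  have he₂0 : (0:ℤ) ≤ (e₂:ℤ) := by positivity
  have he₃0 : (0:ℤ) ≤ (e₃:ℤ) := by positivity
  have hX0 : (0:ℤ) ≤ (l:ℤ) * (p:ℤ) ^ j := by positivity
  have hB0 : (0:ℤ) ≤ (p:ℤ) ^ k := by positivity
  rcases le_or_gt ((p:ℤ) ^ k) ((l:ℤ) * (p:ℤ) ^ j) with hc | hc
  · have h1 : (p:ℤ) ^ k * (2 * (p:ℤ) ^ 2 - 2 * p) ≤ (l:ℤ) * (p:ℤ) ^ j * (2 * (p:ℤ) ^ 2 - 2 * p) :=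
      mul_le_mul_of_nonneg_right hc hA0
    linarith [mul_nonneg he₁0 (by nlinarith : (0:ℤ) ≤ 2 * (p:ℤ) ^ 2 - 2 * p - 1),
      mul_nonneg he₂0 (by nlinarith : (0:ℤ) ≤ 2 * (p:ℤ) ^ 2 - 2 * p + 1),
      mul_nonneg he₃0 (by nlinarith : (0:ℤ) ≤ 2 * (p:ℤ) ^ 2 - 1)]
  · have hc1 : (l:ℤ) * (p:ℤ) ^ j + 1 ≤ (p:ℤ) ^ k := Int.add_one_le_iff.mpr hc
    have hmul := mul_le_mul_of_nonneg_left hc1 (by linarith : (0:ℤ) ≤ (p:ℤ))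
    have he2 : (e₂:ℤ) = 1 := by
      by_contra hcon
      have he0 : (e₂:ℤ) = 0 := by
        rcases lt_or_eq_of_le he₂' with h' | h'
        · exact le_antisymm (by exact_mod_cast Int.lt_add_one_iff.mp (by linarith : (e₂:ℤ) < 0 + 1)) he₂0
        · exact absurd h' hcon
      rw [he0] at h
      linarith
    rw [he2] at h
    have hc2 : (p:ℤ) ^ k ≤ (l:ℤ) * (p:ℤ) ^ j + 1 := by
      by_contra hcon
      push_neg at hcon
      have hc3 : (l:ℤ) * (p:ℤ) ^ j + 1 + 1 ≤ (p:ℤ) ^ k := Int.lt_iff_add_one_le.mp hcon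
      have := mul_le_mul_of_nonneg_left hc3 (by linarith : (0:ℤ) ≤ (p:ℤ))
      linarith
    have h1 : (p:ℤ) ^ k * (2 * (p:ℤ) ^ 2 - 2 * p) ≤
        ((l:ℤ) * (p:ℤ) ^ j + 1) * (2 * (p:ℤ) ^ 2 - 2 * p) :=
      mul_le_mul_of_nonneg_right hc2 hA0
    rw [add_mul, one_mul] at h1
    rw [he2]
    linarith [mul_nonneg he₁0 (by nlinarith : (0:ℤ) ≤ 2 * (p:ℤ) ^ 2 - 2 * p - 1),
      mul_nonneg he₃0 (by nlinarith : (0:ℤ) ≤ 2 * (p:ℤ) ^ 2 - 1)]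
end
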